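/- The equation (1/2)·log₂(1 + 2(ηh²s − P_C)/(πeσ²)) = λs, for λ given by λ = ηh²/((2P_C − eπσ²)·ln 2) · W((2P_C − eπσ²)/(e²πσ²)), has a solution s = x₀² with x₀² = (2P_C − eπσ²)/(2ηh²) − (1/(2λ ln 2))·W( −(eπλσ² ln 2 / (ηh²)) · 2^{(λ/(ηh²))(2P_C − eπσ²)} ), where W is the Lambert W function. -/

import Mathlib

/-!
Write `k = eπσ²`, `A = 2P_C − k`, `c = ηh²` and `w = W(A/(ek))`, so that `λ = cw/(A ln 2)` and
`2^{λA/c} = e^w = A/(ekw)`. The argument of the second `W` then collapses to `−1/e`, where `W`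
is forced to equal `−1`, so `s = A/(2c) + 1/(2λ ln 2)`. For this `s` the argument of the
logarithm is `A/(kw) = e^{1+w}`, and both sides of the equation equal `(1 + w)/(2 ln 2)`.
-/

open Real

theorem ne_zero_and_exp_eq_div_of_mul_exp_eq {w u : ℝ} (hu : u ≠ 0) (hw : w * exp w = u) :
    w ≠ 0 ∧ exp w = u / w := by
  have hw0 : w ≠ 0 := left_ne_zero_of_mul (hw ▸ hu)
  exact ⟨hw0, by rw [eq_div_iff hw0, mul_comm, hw]⟩

theorem eq_neg_one_of_mul_exp_eq_neg_exp_neg_one {t : ℝ} (h : t * exp t = -exp (-1)) :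
    t = -1 := by
  -- `x + 1 = eˣ` only at `x = 0`, and `x = -(t + 1)` solves it.
  by_contra ht
  have hx : -(t + 1) ≠ 0 := fun hx => ht (by linarith)
  have hexp : exp (-(t + 1)) = -t := by
    refine mul_right_cancel₀ (exp_pos t).ne' ?_
    rw [← exp_add]
    ring_nf
    linarith
  linarith [add_one_lt_exp hx]

section Tangency

variable {k c A w lam : ℝ}

theorem tangency_lambert_argument (hk : k ≠ 0) (hc : c ≠ 0) (hA : A ≠ 0)
    (hw : w * exp w = A / (exp 1 * k)) (hlam : lam = c / (A * log 2) * w) :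
    -(k * lam * log 2 / c) * (2 : ℝ) ^ (lam / c * A) = -exp (-1) := by
  obtain ⟨hw0, hexp⟩ := ne_zero_and_exp_eq_div_of_mul_exp_eq (by positivity) hw
  have hpow : log 2 * (lam / c * A) = w := by
    rw [hlam]
    field_simp
  rw [rpow_def_of_pos two_pos, hpow, hexp, hlam, exp_neg]
  field_simp

theorem tangency_equation_of_lambert {P s : ℝ} (hk : k ≠ 0) (hc : c ≠ 0) (hA0 : A ≠ 0)
    (hA : A = 2 * P - k) (hw : w * exp w = A / (exp 1 * k)) (hlam : lam = c / (A * log 2) * w)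
    (hs : s = A / (2 * c) + 1 / (2 * lam * log 2)) :
    1 / 2 * logb 2 (1 + 2 * (c * s - P) / k) = lam * s := by
  obtain ⟨hw0, hexp⟩ := ne_zero_and_exp_eq_div_of_mul_exp_eq (by positivity) hw
  have hinner : 1 + 2 * (c * s - P) / k = exp (1 + w) := by
    rw [exp_add, hexp, hs, hlam]
    field_simp
    linear_combination w * hA
  rw [hinner, logb, log_exp, hs, hlam]
  field_simp
  ring

end Tangency

theorem lambertW_tangency_solution_general (η h P_C σ2 lam : ℝ) (W : ℝ → ℝ)
    (hη : 0 < η) (hh : 0 < h) (hσ2 : 0 < σ2)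
    (hPC : P_C > Real.exp 1 * Real.pi * σ2 / 2)
    (hW : ∀ z : ℝ, -Real.exp (-1) ≤ z → W z * Real.exp (W z) = z ∧ -1 ≤ W z)
    (hlam : lam = η * h ^ 2 / ((2 * P_C - Real.exp 1 * Real.pi * σ2) * Real.log 2)
        * W ((2 * P_C - Real.exp 1 * Real.pi * σ2) / (Real.exp 1 ^ 2 * Real.pi * σ2))) :
    ∀ s : ℝ,
      s = (2 * P_C - Real.exp 1 * Real.pi * σ2) / (2 * η * h ^ 2)
          - (1 / (2 * lam * Real.log 2))
            * W (-(Real.exp 1 * Real.pi * lam * σ2 * Real.log 2 / (η * h ^ 2))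
                * (2 : ℝ) ^ ((lam / (η * h ^ 2)) * (2 * P_C - Real.exp 1 * Real.pi * σ2))) →
      (1 / 2) * Real.logb 2
          (1 + 2 * (η * h ^ 2 * s - P_C) / (Real.pi * Real.exp 1 * σ2)) = lam * s := by
  intro s hs
  set k := exp 1 * π * σ2
  set A := 2 * P_C - k
  have hk : 0 < k := by positivity
  have hc : η * h ^ 2 ≠ 0 := by positivity
  have hA : 0 < A := by simp only [A]; linarith
  have hu : A / (exp 1 ^ 2 * π * σ2) = A / (exp 1 * k) := by ring
  rw [hu] at hlam
  have hu_pos : 0 < A / (exp 1 * k) := by positivity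
  have hw := (hW _ (by linarith [exp_pos (-1)])).1
  have harg := tangency_lambert_argument hk.ne' hc hA.ne' hw hlam
  have hWarg := eq_neg_one_of_mul_exp_eq_neg_exp_neg_one (hW _ le_rfl).1
  rw [show exp 1 * π * lam * σ2 = k * lam by ring, harg, hWarg] at hs
  rw [show π * exp 1 * σ2 = k by ring]
  exact tangency_equation_of_lambert hk.ne' hc hA.ne' rfl hw hlam (by rw [hs]; ring)

/-- The tangency equation `(1/2)log₂(1 + 2(ηh²s − P_C)/(πeσ²)) = λs`, with
`λ = ηh²/((2P_C − eπσ²)ln 2) · W((2P_C − eπσ²)/(e²πσ²))`, has the solution `s = x₀²` given by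
`x₀² = (2P_C − eπσ²)/(2ηh²) − (1/(2λ ln 2))·W(−(eπλσ² ln 2/(ηh²))·2^{(λ/(ηh²))(2P_C − eπσ²)})`,
where `W` is the principal branch of the Lambert W function
(satisfying `W(z)e^{W(z)} = z` and `W(z) ≥ −1` for `z ≥ −1/e`). -/
theorem lambertW_tangency_solution (η h P_C σ2 lam : ℝ) (W : ℝ → ℝ)
    (hη : 0 < η) (hη1 : η < 1) (hh : 0 < h) (hσ2 : 0 < σ2)
    (hPC : P_C > Real.exp 1 * Real.pi * σ2 / 2)
    (hW : ∀ z : ℝ, -Real.exp (-1) ≤ z → W z * Real.exp (W z) = z ∧ -1 ≤ W z)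
    (hlam : lam = η * h ^ 2 / ((2 * P_C - Real.exp 1 * Real.pi * σ2) * Real.log 2)
        * W ((2 * P_C - Real.exp 1 * Real.pi * σ2) / (Real.exp 1 ^ 2 * Real.pi * σ2))) :
    ∀ s : ℝ,
      s = (2 * P_C - Real.exp 1 * Real.pi * σ2) / (2 * η * h ^ 2)
          - (1 / (2 * lam * Real.log 2))
            * W (-(Real.exp 1 * Real.pi * lam * σ2 * Real.log 2 / (η * h ^ 2))
                * (2 : ℝ) ^ ((lam / (η * h ^ 2)) * (2 * P_C - Real.exp 1 * Real.pi * σ2))) →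
      (1 / 2) * Real.logb 2
          (1 + 2 * (η * h ^ 2 * s - P_C) / (Real.pi * Real.exp 1 * σ2)) = lam * s :=
  lambertW_tangency_solution_general η h P_C σ2 lam W hη hh hσ2 hPC hW hlam
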